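/- The sum of all locally finite-dimensional two-sided ideals of an associative F-algebra A is itself a locally finite-dimensional ideal (the locally finite radical Loc(A)). -/
import Mathlib


/-- An `F`-subspace `I` of an `F`-algebra `A` is a two-sided ideal if it is
closed under left and right multiplication by arbitrary elements of `A`. -/
def IsTwoSidedIdeal {F : Type*} [Field F] {A : Type*} [Ring A] [Algebra F A]
    (I : Submodule F A) : Prop :=
  ∀ a : A, ∀ x ∈ I, a * x ∈ I ∧ x * a ∈ I

/-- An ideal `I` of `A` is locally finite dimensional if every finitely
generated (non-unital) subalgebra of `A` whose generators lie in `I` is finite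
dimensional over `F`. -/
def IsLocallyFiniteDimensional (F : Type*) [Field F] {A : Type*} [Ring A] [Algebra F A]
    (I : Submodule F A) : Prop :=
  ∀ s : Finset A, (s : Set A) ⊆ (I : Set A) →
    FiniteDimensional F ↥(NonUnitalAlgebra.adjoin F (s : Set A))

section Aux
variable {F : Type*} [Field F] {A : Type*} [Ring A] [Algebra F A]

lemma aux_sup_tsi {I J : Submodule F A} (hI : IsTwoSidedIdeal I) (hJ : IsTwoSidedIdeal J) :
    IsTwoSidedIdeal (I ⊔ J) := by
  intro a x hx
  obtain ⟨y, hy, z, hz, rfl⟩ := Submodule.mem_sup.mp hx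
  constructor
  · rw [mul_add]
    exact add_mem (le_sup_left (a := I) (b := J) (hI a y hy).1)
      (le_sup_right (a := I) (b := J) (hJ a z hz).1)
  · rw [add_mul]
    exact add_mem (le_sup_left (a := I) (b := J) (hI a y hy).2)
      (le_sup_right (a := I) (b := J) (hJ a z hz).2)

lemma aux_bot_lfd : IsLocallyFiniteDimensional F (⊥ : Submodule F A) := by
  intro s hs
  have h1 : NonUnitalAlgebra.adjoin F (s : Set A) ≤ (⊥ : NonUnitalSubalgebra F A) := by
    apply NonUnitalAlgebra.adjoin_le
    intro x hx
    have := hs hx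
    simp only [Submodule.bot_coe, Set.mem_singleton_iff] at this
    simp [this]
  have h2 : (NonUnitalAlgebra.adjoin F (s : Set A)).toSubmodule ≤ (⊥ : Submodule F A) := by
    intro x hx
    have := h1 hx
    rw [NonUnitalAlgebra.mem_bot] at this
    simp [this]
  exact Submodule.finiteDimensional_of_le (S₂ := ⊥) h2

lemma aux_sup_lfd {I J : Submodule F A} (hI2 : IsTwoSidedIdeal I)
    (hI : IsLocallyFiniteDimensional F I) (hJ : IsLocallyFiniteDimensional F J) :
    IsLocallyFiniteDimensional F (I ⊔ J) := by
  intro s hs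
  classical
  choose iF hiF jF hjF hsum using fun (x : A) (hx : x ∈ s) => Submodule.mem_sup.mp (hs hx)
  set sI : Finset A := s.attach.image (fun x => iF x.1 x.2) with hsI_def
  set sJ : Finset A := s.attach.image (fun x => jF x.1 x.2) with hsJ_def
  have hsJ : (sJ : Set A) ⊆ (J : Set A) := by
    intro y hy
    simp only [hsJ_def, Finset.coe_image, Set.mem_image, Finset.mem_coe, Finset.mem_attach] at hy
    obtain ⟨x, -, rfl⟩ := hy
    exact hjF x.1 x.2
  have hCfd : FiniteDimensional F ↥(NonUnitalAlgebra.adjoin F (sJ : Set A)) := hJ sJ hsJ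
  have hCfg : (NonUnitalAlgebra.adjoin F (sJ : Set A)).toSubmodule.FG :=
    (Submodule.fg_iff_finiteDimensional _).mpr hCfd
  obtain ⟨b, hb⟩ := hCfg
  have hbC : ∀ c ∈ b, c ∈ NonUnitalAlgebra.adjoin F (sJ : Set A) := by
    intro c hc
    have : c ∈ Submodule.span F (b : Set A) := Submodule.subset_span hc
    rw [hb] at this
    exact this
  set D : Finset A := sI ∪ (b ×ˢ sI).image (fun p => p.1 * p.2)
      ∪ (sI ×ˢ b).image (fun p => p.1 * p.2)
      ∪ ((b ×ˢ sI) ×ˢ b).image (fun p => p.1.1 * p.1.2 * p.2) with hD_def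
  have hsImem : ∀ y ∈ sI, y ∈ I := by
    intro y hy
    simp only [hsI_def, Finset.mem_image, Finset.mem_attach, true_and] at hy
    obtain ⟨x, rfl⟩ := hy
    exact hiF x.1 x.2
  have hD1 : ∀ i ∈ sI, i ∈ D := fun i hi =>
    Finset.mem_union_left _ (Finset.mem_union_left _ (Finset.mem_union_left _ hi))
  have hD2 : ∀ e ∈ b, ∀ i ∈ sI, e * i ∈ D := fun e he i hi =>
    Finset.mem_union_left _ (Finset.mem_union_left _ (Finset.mem_union_right _
      (Finset.mem_image.mpr ⟨(e, i), Finset.mem_product.mpr ⟨he, hi⟩, rfl⟩)))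
  have hD3 : ∀ i ∈ sI, ∀ c ∈ b, i * c ∈ D := fun i hi c hc =>
    Finset.mem_union_left _ (Finset.mem_union_right _
      (Finset.mem_image.mpr ⟨(i, c), Finset.mem_product.mpr ⟨hi, hc⟩, rfl⟩))
  have hD4 : ∀ e ∈ b, ∀ i ∈ sI, ∀ c ∈ b, e * i * c ∈ D := fun e he i hi c hc =>
    Finset.mem_union_right _
      (Finset.mem_image.mpr ⟨((e, i), c),
        Finset.mem_product.mpr ⟨Finset.mem_product.mpr ⟨he, hi⟩, hc⟩, rfl⟩)
  have hD : (D : Set A) ⊆ (I : Set A) := by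
    intro y hy
    have hy' : y ∈ D := hy
    rw [hD_def] at hy'
    simp only [Finset.mem_union, Finset.mem_image, Finset.mem_product, Prod.exists] at hy'
    rcases hy' with ((hy' | ⟨e, i, ⟨he, hi⟩, rfl⟩) | ⟨i, c, ⟨hi, hc⟩, rfl⟩)
        | ⟨e, i, c, ⟨⟨he, hi⟩, hc⟩, rfl⟩
    · exact hsImem y hy'
    · exact (hI2 e _ (hsImem _ hi)).1
    · exact (hI2 c _ (hsImem _ hi)).2
    · exact (hI2 c _ (hI2 e _ (hsImem _ hi)).1).2
  have hMfd : FiniteDimensional F ↥(NonUnitalAlgebra.adjoin F (D : Set A)) := hI D hD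
  -- helper: reduce multiplication by elements of the span of `b` to multiplication by `b`
  have key_r : ∀ y : A, (∀ c ∈ b, y * c ∈ NonUnitalAlgebra.adjoin F (D : Set A)) →
      ∀ c ∈ (NonUnitalAlgebra.adjoin F (sJ : Set A)).toSubmodule,
        y * c ∈ NonUnitalAlgebra.adjoin F (D : Set A) := by
    intro y hy c hc
    rw [← hb] at hc
    have hle : Submodule.span F (b : Set A) ≤
        Submodule.comap (LinearMap.mulLeft F y)
          (NonUnitalAlgebra.adjoin F (D : Set A)).toSubmodule := by
      rw [Submodule.span_le]
      intro c₀ hc₀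
      exact hy c₀ hc₀
    exact hle hc
  have key_l : ∀ y : A, (∀ c ∈ b, c * y ∈ NonUnitalAlgebra.adjoin F (D : Set A)) →
      ∀ c ∈ (NonUnitalAlgebra.adjoin F (sJ : Set A)).toSubmodule,
        c * y ∈ NonUnitalAlgebra.adjoin F (D : Set A) := by
    intro y hy c hc
    rw [← hb] at hc
    have hle : Submodule.span F (b : Set A) ≤
        Submodule.comap (LinearMap.mulRight F y)
          (NonUnitalAlgebra.adjoin F (D : Set A)).toSubmodule := by
      rw [Submodule.span_le]
      intro c₀ hc₀
      exact hy c₀ hc₀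
    exact hle hc
  have memC_mul : ∀ x ∈ (NonUnitalAlgebra.adjoin F (sJ : Set A)).toSubmodule,
      ∀ y ∈ (NonUnitalAlgebra.adjoin F (sJ : Set A)).toSubmodule,
      x * y ∈ (NonUnitalAlgebra.adjoin F (sJ : Set A)).toSubmodule := by
    intro x hx y hy
    show x * y ∈ NonUnitalAlgebra.adjoin F (sJ : Set A)
    exact mul_mem hx hy
  have memM_mul : ∀ x ∈ (NonUnitalAlgebra.adjoin F (D : Set A)).toSubmodule,
      ∀ y ∈ (NonUnitalAlgebra.adjoin F (D : Set A)).toSubmodule,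
      x * y ∈ (NonUnitalAlgebra.adjoin F (D : Set A)).toSubmodule := by
    intro x hx y hy
    show x * y ∈ NonUnitalAlgebra.adjoin F (D : Set A)
    exact mul_mem hx hy
  -- the four generator cases
  have gen_r : ∀ d ∈ D, ∀ c ∈ (NonUnitalAlgebra.adjoin F (sJ : Set A)).toSubmodule,
      d * c ∈ NonUnitalAlgebra.adjoin F (D : Set A) := by
    intro d hd
    rw [hD_def] at hd
    simp only [Finset.mem_union, Finset.mem_image, Finset.mem_product, Prod.exists] at hd
    rcases hd with ((hd | ⟨e, i, ⟨he, hi⟩, rfl⟩) | ⟨i, c', ⟨hi, hc'⟩, rfl⟩)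
        | ⟨e, i, c', ⟨⟨he, hi⟩, hc'⟩, rfl⟩
    · exact key_r d (fun c₀ hc₀ => NonUnitalAlgebra.subset_adjoin F (hD3 d hd c₀ hc₀))
    · exact key_r (e * i) (fun c₀ hc₀ => NonUnitalAlgebra.subset_adjoin F (hD4 e he i hi c₀ hc₀))
    · intro c hc
      rw [mul_assoc]
      have hcc : c' * c ∈ (NonUnitalAlgebra.adjoin F (sJ : Set A)).toSubmodule :=
        memC_mul c' (hbC c' hc') c hc
      exact key_r i (fun c₀ hc₀ => NonUnitalAlgebra.subset_adjoin F (hD3 i hi c₀ hc₀)) _ hcc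
    · intro c hc
      rw [mul_assoc]
      have hcc : c' * c ∈ (NonUnitalAlgebra.adjoin F (sJ : Set A)).toSubmodule :=
        memC_mul c' (hbC c' hc') c hc
      exact key_r (e * i)
        (fun c₀ hc₀ => NonUnitalAlgebra.subset_adjoin F (hD4 e he i hi c₀ hc₀)) _ hcc
  have gen_l : ∀ d ∈ D, ∀ c ∈ (NonUnitalAlgebra.adjoin F (sJ : Set A)).toSubmodule,
      c * d ∈ NonUnitalAlgebra.adjoin F (D : Set A) := by
    intro d hd
    rw [hD_def] at hd
    simp only [Finset.mem_union, Finset.mem_image, Finset.mem_product, Prod.exists] at hd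
    rcases hd with ((hd | ⟨e, i, ⟨he, hi⟩, rfl⟩) | ⟨i, c', ⟨hi, hc'⟩, rfl⟩)
        | ⟨e, i, c', ⟨⟨he, hi⟩, hc'⟩, rfl⟩
    · exact key_l d (fun c₀ hc₀ => NonUnitalAlgebra.subset_adjoin F (hD2 c₀ hc₀ d hd))
    · intro c hc
      rw [← mul_assoc]
      have hcc : c * e ∈ (NonUnitalAlgebra.adjoin F (sJ : Set A)).toSubmodule :=
        memC_mul c hc e (hbC e he)
      exact key_l i (fun c₀ hc₀ => NonUnitalAlgebra.subset_adjoin F (hD2 c₀ hc₀ i hi)) _ hcc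
    · exact key_l (i * c') (fun c₀ hc₀ => by
        rw [← mul_assoc]
        exact NonUnitalAlgebra.subset_adjoin F (hD4 c₀ hc₀ i hi c' hc'))
    · intro c hc
      have heq : c * (e * i * c') = c * e * (i * c') := by
        simp only [mul_assoc]
      rw [heq]
      have hcc : c * e ∈ (NonUnitalAlgebra.adjoin F (sJ : Set A)).toSubmodule :=
        memC_mul c hc e (hbC e he)
      exact key_l (i * c') (fun c₀ hc₀ => by
        rw [← mul_assoc]
        exact NonUnitalAlgebra.subset_adjoin F (hD4 c₀ hc₀ i hi c' hc')) _ hcc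
  -- every element of M multiplied by an element of C stays in M
  have claim_r : ∀ m ∈ NonUnitalAlgebra.adjoin F (D : Set A),
      ∀ c ∈ (NonUnitalAlgebra.adjoin F (sJ : Set A)).toSubmodule,
      m * c ∈ NonUnitalAlgebra.adjoin F (D : Set A) := by
    intro m hm
    induction hm using NonUnitalAlgebra.adjoin_induction with
    | mem d hd => exact gen_r d hd
    | add x y hx hy ihx ihy =>
      intro c hc
      rw [add_mul]
      exact add_mem (ihx c hc) (ihy c hc)
    | zero =>
      intro c hc
      rw [zero_mul]
      exact zero_mem _
    | mul x y hx hy ihx ihy =>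
      intro c hc
      rw [mul_assoc]
      exact mul_mem hx (ihy c hc)
    | smul r x hx ihx =>
      intro c hc
      rw [smul_mul_assoc]
      exact SMulMemClass.smul_mem r (ihx c hc)
  have claim_l : ∀ m ∈ NonUnitalAlgebra.adjoin F (D : Set A),
      ∀ c ∈ (NonUnitalAlgebra.adjoin F (sJ : Set A)).toSubmodule,
      c * m ∈ NonUnitalAlgebra.adjoin F (D : Set A) := by
    intro m hm
    induction hm using NonUnitalAlgebra.adjoin_induction with
    | mem d hd => exact gen_l d hd
    | add x y hx hy ihx ihy =>
      intro c hc
      rw [mul_add]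
      exact add_mem (ihx c hc) (ihy c hc)
    | zero =>
      intro c hc
      rw [mul_zero]
      exact zero_mem _
    | mul x y hx hy ihx ihy =>
      intro c hc
      rw [← mul_assoc]
      exact mul_mem (ihx c hc) hy
    | smul r x hx ihx =>
      intro c hc
      rw [mul_smul_comm]
      exact SMulMemClass.smul_mem r (ihx c hc)
  -- the sum M + C is a subalgebra
  set V : Submodule F A := (NonUnitalAlgebra.adjoin F (D : Set A)).toSubmodule ⊔
      (NonUnitalAlgebra.adjoin F (sJ : Set A)).toSubmodule with hV_def
  have hmulV : ∀ x y, x ∈ V → y ∈ V → x * y ∈ V := by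
    intro x y hx hy
    obtain ⟨m, hm, c, hc, rfl⟩ := Submodule.mem_sup.mp hx
    obtain ⟨m', hm', c', hc', rfl⟩ := Submodule.mem_sup.mp hy
    have heq : (m + c) * (m' + c') = (m * m' + m * c' + c * m') + c * c' := by
      noncomm_ring
    rw [heq]
    refine Submodule.mem_sup.mpr ⟨m * m' + m * c' + c * m', ?_, c * c', ?_, rfl⟩
    · exact add_mem (add_mem (memM_mul m hm m' hm')
        (claim_r m hm c' hc')) (claim_l m' hm' c hc)
    · exact memC_mul c hc c' hc'
  have hsub : (s : Set A) ⊆ (V.toNonUnitalSubalgebra hmulV : Set A) := by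
    intro x hx
    have hx' : x ∈ s := hx
    show x ∈ V
    rw [← hsum x hx']
    refine Submodule.mem_sup.mpr ⟨iF x hx', ?_, jF x hx', ?_, rfl⟩
    · exact NonUnitalAlgebra.subset_adjoin F
        (hD1 _ (Finset.mem_image.mpr ⟨⟨x, hx'⟩, Finset.mem_attach _ _, rfl⟩))
    · exact NonUnitalAlgebra.subset_adjoin F
        (Finset.mem_image.mpr ⟨⟨x, hx'⟩, Finset.mem_attach _ _, rfl⟩)
  have hle := NonUnitalAlgebra.adjoin_le hsub
  have hle' : (NonUnitalAlgebra.adjoin F (s : Set A)).toSubmodule ≤ V := by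
    intro x hx
    exact hle hx
  haveI : FiniteDimensional F
      ↥((NonUnitalAlgebra.adjoin F (D : Set A)).toSubmodule) := hMfd
  haveI : FiniteDimensional F
      ↥((NonUnitalAlgebra.adjoin F (sJ : Set A)).toSubmodule) := hCfd
  haveI : FiniteDimensional F ↥V := Submodule.finiteDimensional_sup _ _
  exact Submodule.finiteDimensional_of_le (S₂ := V) hle'

end Aux

/-- The sum of all locally finite-dimensional two-sided ideals of an
associative `F`-algebra `A` is itself a locally finite-dimensional two-sided
ideal (the locally finite radical `Loc(A)`). -/
theorem loc_radical_isLocallyFiniteDimensional (F : Type*) [Field F]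
    (A : Type*) [Ring A] [Algebra F A] :
    IsTwoSidedIdeal
        (sSup {I : Submodule F A | IsTwoSidedIdeal I ∧ IsLocallyFiniteDimensional F I}) ∧
      IsLocallyFiniteDimensional F
        (sSup {I : Submodule F A | IsTwoSidedIdeal I ∧ IsLocallyFiniteDimensional F I}) := by
  classical
  set S : Set (Submodule F A) :=
    {I | IsTwoSidedIdeal I ∧ IsLocallyFiniteDimensional F I} with hS_def
  have hbot : (⊥ : Submodule F A) ∈ S := by
    refine ⟨fun a x hx => ?_, aux_bot_lfd⟩
    rw [Submodule.mem_bot] at hx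
    subst hx
    simp
  have hdir : DirectedOn (· ≤ ·) S := by
    rintro I ⟨hI1, hI2⟩ J ⟨hJ1, hJ2⟩
    exact ⟨I ⊔ J, ⟨aux_sup_tsi hI1 hJ1, aux_sup_lfd hI1 hI2 hJ2⟩, le_sup_left, le_sup_right⟩
  constructor
  · intro a x hx
    obtain ⟨I, hIS, hxI⟩ := (Submodule.mem_sSup_of_directed ⟨⊥, hbot⟩ hdir).mp hx
    exact ⟨le_sSup hIS (hIS.1 a x hxI).1, le_sSup hIS (hIS.1 a x hxI).2⟩
  · intro s hs
    have key : ∀ t : Finset A, (t : Set A) ⊆ ((sSup S : Submodule F A) : Set A) →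
        ∃ I ∈ S, (t : Set A) ⊆ (I : Set A) := by
      intro t
      induction t using Finset.induction_on with
      | empty => exact fun _ => ⟨⊥, hbot, by simp⟩
      | @insert a t ha ih =>
        intro hsub
        obtain ⟨I, hIS, hI⟩ := ih (fun x hx =>
          hsub (Finset.mem_coe.mpr (Finset.mem_insert_of_mem (Finset.mem_coe.mp hx))))
        have hax : a ∈ sSup S := hsub (Finset.mem_coe.mpr (Finset.mem_insert_self a t))
        obtain ⟨Ia, hIaS, hIa⟩ := (Submodule.mem_sSup_of_directed ⟨⊥, hbot⟩ hdir).mp hax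
        obtain ⟨K, hKS, hIK, hIaK⟩ := hdir I hIS Ia hIaS
        refine ⟨K, hKS, fun x hx => ?_⟩
        rcases Finset.mem_insert.mp hx with rfl | hx'
        · exact hIaK hIa
        · exact hIK (hI hx')
    obtain ⟨I, hIS, hsI⟩ := key s hs
    exact hIS.2 s hsI
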